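/- Let χ : X → [0,∞) be a bounded continuous function such that ∫_G χ(g·x)² dg = 1 for every x ∈ X and such that {g ∈ G : χ(g·x) ≠ 0} is relatively compact for every x ∈ X. Let κ be a bounded Borel G-equivariant kernel of propagation at most r, and let σ : X → ℂ be a Borel G-invariant function (σ(g·x) = σ(x) for all g, x) such that for each fixed x ∈ X the function (x',g) ↦ χ(x')² · κ(g⁻¹·x, x') · σ(x') is integrable on X × G with respect to μ ⊗ dg. Then for every x ∈ X, ∫_X ∫_G χ(x')² κ(g⁻¹·x, x') σ(x') dg dμ(x') = ∫_{X/G} Av(κ)(x, s₀(ω)) · σ(s₀(ω)) dν(ω). Equivalently, compressing the averaged-over-G integral operator by the cutoff χ and applying it to χ·σ gives χ times the action of the averaged kernel Av(κ) over the orbit space on σ. -/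

import Mathlib

open MeasureTheory

/-! By Weil's formula the left-hand side is an integral over `X/G` of integrals along the orbits
`h ↦ h • s₀ ω`. Along an orbit, `σ` is constant by invariance and the averaged kernel
`y ↦ ∫ g, κ (g⁻¹ • x, y)` is constant by equivariance and right invariance of the Haar measure,
so the orbit integral factors as `(∫ h, χ (h • s₀ ω) ^ 2) · Av(κ)(x, s₀ ω) · σ (s₀ ω)`, and the
first factor is `1`. Fubini, needed to see that Weil's formula applies, requires `μG` to be
s-finite; this holds because a proper action on a σ-compact space forces `G` to be σ-compact. -/

section ProperAction

variable {G X : Type*} [Group G] [TopologicalSpace G] [TopologicalSpace X] [MulAction G X]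

theorem ProperSMul.isCompact_setOf_smul_mem [ProperSMul G X] (x : X) {K : Set X}
    (hK : IsCompact K) : IsCompact {g : G | g • x ∈ K} := by
  have hpre : {g : G | g • x ∈ K} =
      Prod.fst '' ((fun p : G × X => (p.1 • p.2, p.2)) ⁻¹' (K ×ˢ {x})) := by
    ext g
    constructor
    · intro hg
      exact ⟨(g, x), ⟨hg, rfl⟩, rfl⟩
    · rintro ⟨⟨g, y⟩, ⟨hgy, rfl : y = x⟩, rfl⟩
      exact hgy
  rw [hpre]
  exact ((ProperSMul.isProperMap_smul_pair.isCompact_preimage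
    (hK.prod isCompact_singleton))).image continuous_fst

theorem ProperSMul.sigmaCompactSpace [ProperSMul G X] [SigmaCompactSpace X] [Nonempty X] :
    SigmaCompactSpace G := by
  obtain ⟨x⟩ := ‹Nonempty X›
  refine ⟨⟨fun n => {g : G | g • x ∈ compactCovering X n},
    fun n => isCompact_setOf_smul_mem x (isCompact_compactCovering X n), ?_⟩⟩
  ext g
  simpa using exists_mem_compactCovering (g • x)

end ProperAction

theorem integral_apply_inv_smul_smul_right {G X E : Type*} [Group G] [MeasurableSpace G]
    [MeasurableMul G] [MulAction G X] [NormedAddCommGroup E] [NormedSpace ℝ E]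
    (μG : Measure G) [μG.IsMulRightInvariant] {κ : X × X → E}
    (hκ : ∀ (g : G) (x y : X), κ (g • x, g • y) = κ (x, y)) (x y : X) (h : G) :
    ∫ g, κ (g⁻¹ • x, h • y) ∂μG = ∫ g, κ (g⁻¹ • x, y) ∂μG := by
  have hshift : ∀ g : G, κ (g⁻¹ • x, h • y) = κ ((g * h)⁻¹ • x, y) := fun g => by
    rw [← hκ h⁻¹, inv_smul_smul, mul_inv_rev, mul_smul]
  simp_rw [hshift]
  exact integral_mul_right_eq_self (fun g => κ (g⁻¹ • x, y)) h

theorem compressed_averaged_operator_eq_orbit_space_operator_general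
    {G X : Type*}
    [Group G] [TopologicalSpace G] [IsTopologicalGroup G]
    [MeasurableSpace G] [BorelSpace G]
    (μG : Measure G) [μG.IsHaarMeasure] [μG.IsMulRightInvariant]
    [MetricSpace X] [ProperSpace X] [MeasurableSpace X]
    [MulAction G X]
    (hproper : IsProperMap fun p : G × X => (p.1 • p.2, p.2))
    (μ : Measure X)
    [MeasurableSpace (Quotient (MulAction.orbitRel G X))]
    (ν : Measure (Quotient (MulAction.orbitRel G X)))
    (s₀ : Quotient (MulAction.orbitRel G X) → X)
    (hWeil : ∀ φ : X → ℂ, Integrable φ μ →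
      ∫ x, φ x ∂μ = ∫ ω, ∫ g, φ (g • s₀ ω) ∂μG ∂ν)
    (χ : X → ℝ)
    (hχ_int : ∀ x : X, ∫ g, (χ (g • x)) ^ 2 ∂μG = 1)
    (κ : X × X → ℂ)
    (hκ_equiv : ∀ (g : G) (x x' : X), κ (g • x, g • x') = κ (x, x'))
    (σ : X → ℂ)
    (hσ_inv : ∀ (g : G) (x : X), σ (g • x) = σ x)
    (hint : ∀ x : X,
      Integrable (fun p : X × G =>
        ((χ p.1 : ℂ)) ^ 2 * κ (p.2⁻¹ • x, p.1) * σ p.1) (μ.prod μG)) :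
    ∀ x : X,
      ∫ x' : X, (∫ g : G, ((χ x' : ℂ)) ^ 2 * κ (g⁻¹ • x, x') * σ x' ∂μG) ∂μ =
        ∫ ω, (∫ g : G, κ (g⁻¹ • x, s₀ ω) ∂μG) * σ (s₀ ω) ∂ν := by
  intro x
  have : ProperSMul G X := ⟨hproper⟩
  have : Nonempty X := ⟨x⟩
  have := ProperSMul.sigmaCompactSpace (G := G) (X := X)
  rw [hWeil _ (hint x).integral_prod_left]
  congr 1 with ω
  have hχ_orbit : ∫ h, (χ (h • s₀ ω) : ℂ) ^ 2 ∂μG = 1 := by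
    simp_rw [← Complex.ofReal_pow]
    rw [integral_complex_ofReal, hχ_int, Complex.ofReal_one]
  calc ∫ h, ∫ g, (χ (h • s₀ ω) : ℂ) ^ 2 * κ (g⁻¹ • x, h • s₀ ω) * σ (h • s₀ ω) ∂μG ∂μG
      = ∫ h, (χ (h • s₀ ω) : ℂ) ^ 2 * ((∫ g, κ (g⁻¹ • x, s₀ ω) ∂μG) * σ (s₀ ω)) ∂μG := by
        congr 1 with h
        simp_rw [mul_assoc]
        rw [integral_const_mul, integral_mul_const,
          integral_apply_inv_smul_smul_right μG hκ_equiv, hσ_inv]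
    _ = (∫ g, κ (g⁻¹ • x, s₀ ω) ∂μG) * σ (s₀ ω) := by
        rw [integral_mul_const, hχ_orbit, one_mul]

/-- Compressing the averaged-over-`G` integral operator with equivariant
kernel `κ` by a cutoff function `χ` and applying it to `χ·σ`, for a `G`-invariant `σ`,
gives the action of the averaged kernel `Av(κ)` over the orbit space on `σ`:
`∫_X ∫_G χ(x')² κ(g⁻¹·x, x') σ(x') dg dμ(x') = ∫_{X/G} Av(κ)(x, s₀(ω)) σ(s₀(ω)) dν(ω)`. -/
theorem compressed_averaged_operator_eq_orbit_space_operator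
    {G X : Type*}
    [Group G] [TopologicalSpace G] [IsTopologicalGroup G] [LocallyCompactSpace G] [T2Space G]
    [MeasurableSpace G] [BorelSpace G]
    (μG : Measure G) [μG.IsHaarMeasure] [μG.IsMulRightInvariant] [μG.IsInvInvariant]
    [MetricSpace X] [ProperSpace X] [MeasurableSpace X] [BorelSpace X]
    [MulAction G X] [ContinuousSMul G X]
    (hiso : ∀ (g : G) (x y : X), dist (g • x) (g • y) = dist x y)
    (hproper : IsProperMap fun p : G × X => (p.1 • p.2, p.2))
    (μ : Measure X) [SMulInvariantMeasure G X μ] [IsLocallyFiniteMeasure μ]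
    [MeasurableSpace (Quotient (MulAction.orbitRel G X))]
    (ν : Measure (Quotient (MulAction.orbitRel G X)))
    (s₀ : Quotient (MulAction.orbitRel G X) → X)
    (hs₀_meas : Measurable s₀)
    (hs₀_sec : ∀ ω, Quotient.mk (MulAction.orbitRel G X) (s₀ ω) = ω)
    (hWeil : ∀ φ : X → ℂ, Integrable φ μ →
      ∫ x, φ x ∂μ = ∫ ω, ∫ g, φ (g • s₀ ω) ∂μG ∂ν)
    (χ : X → ℝ) (hχ_cont : Continuous χ) (hχ_nonneg : ∀ x, 0 ≤ χ x)
    (hχ_bdd : ∃ C, ∀ x, χ x ≤ C)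
    (hχ_cpt : ∀ x : X, IsCompact (closure {g : G | χ (g • x) ≠ 0}))
    (hχ_int : ∀ x : X, ∫ g, (χ (g • x)) ^ 2 ∂μG = 1)
    (κ : X × X → ℂ) (r : ℝ)
    (hκ_meas : Measurable κ)
    (hκ_bdd : ∃ C, ∀ p, ‖κ p‖ ≤ C)
    (hκ_equiv : ∀ (g : G) (x x' : X), κ (g • x, g • x') = κ (x, x'))
    (hκ_prop : ∀ x x' : X, r < dist x x' → κ (x, x') = 0)
    (σ : X → ℂ) (hσ_meas : Measurable σ)
    (hσ_inv : ∀ (g : G) (x : X), σ (g • x) = σ x)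
    (hint : ∀ x : X,
      Integrable (fun p : X × G =>
        ((χ p.1 : ℂ)) ^ 2 * κ (p.2⁻¹ • x, p.1) * σ p.1) (μ.prod μG)) :
    ∀ x : X,
      ∫ x' : X, (∫ g : G, ((χ x' : ℂ)) ^ 2 * κ (g⁻¹ • x, x') * σ x' ∂μG) ∂μ =
        ∫ ω, (∫ g : G, κ (g⁻¹ • x, s₀ ω) ∂μG) * σ (s₀ ω) ∂ν :=
  compressed_averaged_operator_eq_orbit_space_operator_general μG hproper μ ν s₀ hWeil χ hχ_int κ
    hκ_equiv σ hσ_inv hint
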